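/- Let A be a finite hoop and F a filter of A. For congruence classes X, Y in A/F with top elements t_X, t_Y, we have t_X ∧ t_Y = t_{X∧Y} and t_X → t_Y = t_{X→Y}. -/
import Mathlib


/-- A hoop: a commutative monoid with a residuation-like arrow satisfying
(H1) `x → x = 1`, (H2) `(x·y) → z = x → (y → z)`, (H3) `x·(x→y) = y·(y→x)`. -/
class Hoop (α : Type*) extends CommMonoid α where
  arr : α → α → α
  arr_self : ∀ x : α, arr x x = 1
  arr_mul : ∀ x y z : α, arr (x * y) z = arr x (arr y z)
  divis : ∀ x y : α, x * arr x y = y * arr y x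

namespace Hoop

variable {α β γ : Type*} [Hoop α] [Hoop β] [Hoop γ]

/-- The induced order: `x ≤ y` iff `x → y = 1`. -/
def hle (x y : α) : Prop := arr x y = 1

/-- The induced meet: `x ∧ y = x·(x → y)`. -/
def hmeet (x y : α) : α := x * arr x y

/-- A filter of a hoop: a nonempty up-set closed under multiplication. -/
def IsFilter (F : Set α) : Prop :=
  F.Nonempty ∧ (∀ x ∈ F, ∀ y : α, hle x y → y ∈ F) ∧ ∀ x ∈ F, ∀ y ∈ F, x * y ∈ F

/-- The congruence induced by a filter: `x θ_F y` iff `(x→y)·(y→x) ∈ F`. -/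
def frel (F : Set α) (x y : α) : Prop := arr x y * arr y x ∈ F

/- ----------------  auxiliary lemmas  ---------------- -/

lemma arr_arr (y z : α) : arr 1 (arr y z) = arr y z := by
  rw [← arr_mul, one_mul]

lemma arr_arr_self (x y : α) : arr x (arr y x) = arr y 1 := by
  rw [← arr_mul, mul_comm, arr_mul, arr_self]

lemma one_arr_eq (x : α) : arr 1 x = x * arr x 1 := by
  have h := divis x 1
  rw [one_mul] at h
  exact h.symm

lemma mul_arr_one (x : α) : x * arr x 1 = x := by
  have h1 : arr x (arr 1 x) = 1 := by rw [← arr_mul, mul_one, arr_self]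
  have hI : arr 1 x * arr (arr 1 x) x = x := by
    have h := divis (arr 1 x) x
    rw [h1, mul_one] at h
    exact h
  have h3 : arr (arr 1 x) x = arr (arr x 1) 1 := by
    rw [one_arr_eq x, mul_comm, arr_mul, arr_self]
  have h4 : arr x 1 * arr (arr x 1) 1 = arr x 1 := by
    have h := one_arr_eq (arr x 1)
    rw [arr_arr] at h
    exact h.symm
  calc x * arr x 1
      = x * (arr x 1 * arr (arr x 1) 1) := by rw [h4]
    _ = (x * arr x 1) * arr (arr x 1) 1 := by rw [mul_assoc]
    _ = arr 1 x * arr (arr 1 x) x := by rw [h3, one_arr_eq x]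
    _ = x := hI

lemma one_arr (x : α) : arr 1 x = x := by rw [one_arr_eq, mul_arr_one]

lemma arr_one (x : α) : arr x 1 = 1 := by
  have h5 : arr x (arr x 1) = arr x 1 := by
    have h : arr (x * arr x 1) (arr x 1) = arr x 1 := by
      rw [arr_mul, arr_self]
    rw [mul_arr_one] at h
    exact h
  have h6 := arr_arr_self (arr x 1) x
  rw [h5, arr_self] at h6
  exact h6.symm

lemma hle_refl (x : α) : hle x x := arr_self x

lemma hle_one (x : α) : hle x 1 := arr_one x

lemma hle_antisymm {x y : α} (h1 : hle x y) (h2 : hle y x) : x = y := by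
  have h1' : arr x y = 1 := h1
  have h2' : arr y x = 1 := h2
  have h := divis x y
  rw [h1', h2', mul_one, mul_one] at h
  exact h

lemma mul_hle_left (x y : α) : hle (x * y) x := by
  show arr (x * y) x = 1
  rw [mul_comm, arr_mul, arr_self, arr_one]

lemma mul_hle_right (x y : α) : hle (x * y) y := by
  rw [mul_comm]; exact mul_hle_left y x

lemma eq_mul_of_hle {x y : α} (h : hle x y) : x = y * arr y x := by
  have h' : arr x y = 1 := h
  have hd := divis x y
  rw [h', mul_one] at hd
  exact hd

lemma hle_trans {x y z : α} (h1 : hle x y) (h2 : hle y z) : hle x z := by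
  have e1 := eq_mul_of_hle h1
  have e2 := eq_mul_of_hle h2
  have e3 : x = z * (arr z y * arr y x) := by
    calc x = y * arr y x := e1
      _ = (z * arr z y) * arr y x := congrArg (fun t => t * arr y x) e2
      _ = z * (arr z y * arr y x) := mul_assoc _ _ _
  rw [e3]
  exact mul_hle_left _ _

lemma mul_hle_mul_left {y z : α} (h : hle y z) (x : α) : hle (x * y) (x * z) := by
  rw [eq_mul_of_hle h, ← mul_assoc]
  exact mul_hle_left _ _

lemma mul_hle_mul_right {x y : α} (h : hle x y) (z : α) : hle (x * z) (y * z) := by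
  rw [mul_comm x z, mul_comm y z]
  exact mul_hle_mul_left h z

lemma hle_arr_of {x y z : α} (h : hle (x * y) z) : hle x (arr y z) := by
  show arr x (arr y z) = 1
  rw [← arr_mul]
  exact h

lemma mul_hle_of_hle_arr {x y z : α} (h : hle x (arr y z)) : hle (x * y) z := by
  have h1 : hle (x * y) (arr y z * y) := mul_hle_mul_right h y
  have h2 : hle (arr y z * y) z := by
    rw [mul_comm, divis y z]
    exact mul_hle_left _ _
  exact hle_trans h1 h2

lemma arr_hle_arr_right {y z : α} (h : hle y z) (x : α) : hle (arr x y) (arr x z) :=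
  hle_arr_of (hle_trans (mul_hle_of_hle_arr (hle_refl (arr x y))) h)

lemma hmeet_hle_left (x y : α) : hle (hmeet x y) x := mul_hle_left x (arr x y)

lemma hmeet_hle_right (x y : α) : hle (hmeet x y) y := by
  show hle (x * arr x y) y
  rw [divis]
  exact mul_hle_left _ _

lemma hle_hmeet {c x y : α} (h1 : hle c x) (h2 : hle c y) : hle c (hmeet x y) := by
  have e := eq_mul_of_hle h1
  have hs : hle (arr x c) (arr x y) := by
    apply hle_arr_of
    have : hle (arr x c * x) y := by rw [mul_comm, ← e]; exact h2
    exact this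
  show hle c (x * arr x y)
  rw [e]
  exact mul_hle_mul_left hs x

lemma hmeet_eq_of_hle {z w : α} (h : hle z w) : hmeet w z = z := by
  show w * arr w z = z
  have h' : arr z w = 1 := h
  rw [divis, h', mul_one]

/-- In a finite hoop, for classes `X, Y` of the congruence of a filter `F`,
with top elements `t_X, t_Y`: `t_X ∧ t_Y = t_{X∧Y}` and `t_X → t_Y = t_{X→Y}`. -/
theorem top_hmeet_arr [Fintype α] (F : Set α) (hF : IsFilter F)
    (x y tX tY tM tA : α)
    (htX : frel F x tX ∧ ∀ c : α, frel F x c → hle c tX)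
    (htY : frel F y tY ∧ ∀ c : α, frel F y c → hle c tY)
    (htM : frel F (hmeet x y) tM ∧ ∀ c : α, frel F (hmeet x y) c → hle c tM)
    (htA : frel F (arr x y) tA ∧ ∀ c : α, frel F (arr x y) c → hle c tA) :
    hmeet tX tY = tM ∧ arr tX tY = tA := by
  classical
  obtain ⟨hne, hup, hmul⟩ := hF
  -- a minimum element of the filter
  obtain ⟨g, hgF, hgmin⟩ : ∃ g, g ∈ F ∧ ∀ f ∈ F, hle g f := by
    obtain ⟨f0, hf0⟩ := hne
    refine ⟨∏ a ∈ (Set.toFinite F).toFinset, a, ?_, ?_⟩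
    · exact Finset.prod_induction _ (· ∈ F) (fun a b ha hb => hmul a ha b hb)
        (hup f0 hf0 1 (hle_one f0)) (fun a ha => (Set.Finite.mem_toFinset _).mp ha)
    · intro f hf
      rw [← Finset.mul_prod_erase _ _ ((Set.Finite.mem_toFinset _).mpr hf)]
      exact mul_hle_left _ _
  have hid : g * g = g := hle_antisymm (mul_hle_left g g) (hgmin _ (hmul g hgF g hgF))
  -- characterisation of the congruence
  have frel_iff : ∀ a b : α, frel F a b ↔ g * a = g * b := by
    intro a b
    constructor
    · intro h
      have hab : hle g (arr a b) := hle_trans (hgmin _ h) (mul_hle_left _ _)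
      have hba : hle g (arr b a) := hle_trans (hgmin _ h) (mul_hle_right _ _)
      have h1 : hle (g * a) b := mul_hle_of_hle_arr hab
      have h2 : hle (g * b) a := mul_hle_of_hle_arr hba
      have h1' : hle (g * a) (g * b) := by
        have := mul_hle_mul_left h1 g
        rwa [← mul_assoc, hid] at this
      have h2' : hle (g * b) (g * a) := by
        have := mul_hle_mul_left h2 g
        rwa [← mul_assoc, hid] at this
      exact hle_antisymm h1' h2'
    · intro h
      have hab : hle g (arr a b) := hle_arr_of (by rw [h]; exact mul_hle_right _ _)
      have hba : hle g (arr b a) := hle_arr_of (by rw [← h]; exact mul_hle_right _ _)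
      have hm : hle g (arr a b * arr b a) := by
        have h1 := mul_hle_mul_right hab g
        have h2 := mul_hle_mul_left hba (arr a b)
        have h3 := hle_trans h1 h2
        rwa [hid] at h3
      exact hup g hgF _ hm
  -- the canonical top of a class
  have habs : ∀ a : α, g * arr g (g * a) = g * a := fun a =>
    hmeet_eq_of_hle (mul_hle_left g a)
  have top_eq : ∀ a t : α, frel F a t → (∀ c, frel F a c → hle c t) →
      t = arr g (g * a) := by
    intro a t h1 h2
    have hf : frel F a (arr g (g * a)) := (frel_iff _ _).mpr (habs a).symm
    have hle1 : hle (arr g (g * a)) t := h2 _ hf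
    have hle2 : hle t (arr g (g * a)) := by
      apply hle_arr_of
      have hgt : g * a = g * t := (frel_iff _ _).mp h1
      rw [mul_comm t g, ← hgt]
      exact hle_refl _
    exact hle_antisymm hle2 hle1
  -- compatibility of the arrow modulo g
  have arr_key : ∀ a a' b b' : α, g * a = g * a' → g * b = g * b' →
      hle (g * arr a b) (arr a' b') := by
    intro a a' b b' ha hb
    apply hle_arr_of
    have e1 : g * arr a b * a' = arr a b * (g * a') := by
      rw [mul_comm g (arr a b), mul_assoc]
    rw [e1, ← ha]
    have e2 : arr a b * (g * a) = g * (a * arr a b) := by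
      rw [mul_comm a (arr a b), ← mul_assoc, mul_comm (arr a b) g, mul_assoc]
    rw [e2]
    have h3 : hle (g * (a * arr a b)) (g * b) := mul_hle_mul_left (hmeet_hle_right a b) g
    exact hle_trans h3 (by rw [hb]; exact mul_hle_right g b')
  have arr_compat : ∀ a a' b b' : α, g * a = g * a' → g * b = g * b' →
      g * arr a b = g * arr a' b' := by
    intro a a' b b' ha hb
    have h1 := arr_key a a' b b' ha hb
    have h2 := arr_key a' a b' b ha.symm hb.symm
    have h1' : hle (g * arr a b) (g * arr a' b') := by
      have := mul_hle_mul_left h1 g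
      rwa [← mul_assoc, hid] at this
    have h2' : hle (g * arr a' b') (g * arr a b) := by
      have := mul_hle_mul_left h2 g
      rwa [← mul_assoc, hid] at this
    exact hle_antisymm h1' h2'
  -- the tops
  have eX := top_eq x tX htX.1 htX.2
  have eY := top_eq y tY htY.1 htY.2
  have eM := top_eq (hmeet x y) tM htM.1 htM.2
  have eA := top_eq (arr x y) tA htA.1 htA.2
  have gX : g * tX = g * x := by rw [eX, habs]
  have gY : g * tY = g * y := by rw [eY, habs]
  have gAt : g * tA = g * arr x y := by rw [eA, habs]
  have gA' : g * arr tX tY = g * arr x y := arr_compat tX x tY y gX gY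
  have expand : ∀ p q : α, g * (p * q) = (g * p) * (g * q) := by
    intro p q
    rw [mul_mul_mul_comm, hid]
  have gmeet : g * (tX * arr tX tY) = g * (x * arr x y) := by
    rw [expand, expand, gX, gA']
  -- part 1 : meet
  have hm1 : hle (hmeet tX tY) tM := htM.2 _ ((frel_iff _ _).mpr gmeet.symm)
  have hm2 : hle tM (hmeet tX tY) := by
    have hMX : hle tM tX := by
      rw [eM, eX]
      exact arr_hle_arr_right (mul_hle_mul_left (hmeet_hle_left x y) g) g
    have hMY : hle tM tY := by
      rw [eM, eY]
      exact arr_hle_arr_right (mul_hle_mul_left (hmeet_hle_right x y) g) g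
    exact hle_hmeet hMX hMY
  -- part 2 : arrow
  have ha1 : hle (arr tX tY) tA := htA.2 _ ((frel_iff _ _).mpr gA'.symm)
  have ha2 : hle tA (arr tX tY) := by
    apply hle_arr_of
    rw [eY]
    apply hle_arr_of
    have e : tA * tX * g = (g * tA) * (g * tX) := by
      rw [mul_mul_mul_comm, hid, mul_comm]
    rw [e, gAt, gX]
    have e2 : (g * arr x y) * (g * x) = g * (x * arr x y) := by
      rw [mul_mul_mul_comm, hid, mul_comm (arr x y) x]
    rw [e2]
    exact mul_hle_mul_left (hmeet_hle_right x y) g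
  exact ⟨hle_antisymm hm1 hm2, hle_antisymm ha1 ha2⟩

end Hoop
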